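/- Let d be a natural number, E := EuclideanSpace ℝ (Fin d), let Ω ⊆ E be a nonempty closed set, and let f : E → E satisfy f(Ω) ⊆ Ω and be Lipschitz on Ω with constant K < 1, with fixed point z* lying in the interior of Ω (f(z*) = z*). Let g : E → ℝ be continuous on Ω, differentiable at z*, and satisfy g(f(z)) ≥ g(z) for every z ∈ Ω. Then z* is a stationary point of g: ∇g(z*) = 0. -/

import Mathlib

/-!
Along every orbit of `f` in `Ω` the value of `g` can only increase, while the orbit converges
to `z*` because `f` contracts distances to its fixed point. By continuity, `g z ≤ g z*` for every
`z ∈ Ω`, so `z*` is a maximizer of `g` on a neighbourhood of itself, and the derivative of `g`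
vanishes there.
-/

open Filter Function Set Topology
open scoped NNReal

section ContractionToFixedPoint

variable {α : Type*} [PseudoMetricSpace α] {f : α → α} {s : Set α} {K : ℝ≥0} {x z : α}

theorem LipschitzOnWith.dist_iterate_le_of_isFixedPt (hlip : LipschitzOnWith K f s)
    (hmaps : MapsTo f s s) (hx : x ∈ s) (hfix : IsFixedPt f x) (hz : z ∈ s) (n : ℕ) :
    dist (f^[n] z) x ≤ K ^ n * dist z x := by
  induction n with
  | zero => simp
  | succ n ih =>
    calc dist (f^[n + 1] z) x = dist (f (f^[n] z)) (f x) := by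
          rw [iterate_succ_apply', hfix.eq]
      _ ≤ K * dist (f^[n] z) x := hlip.dist_le_mul _ (hmaps.iterate n hz) _ hx
      _ ≤ K * (K ^ n * dist z x) := by gcongr
      _ = K ^ (n + 1) * dist z x := by ring

theorem LipschitzOnWith.tendsto_iterate_of_isFixedPt (hlip : LipschitzOnWith K f s)
    (hK : K < 1) (hmaps : MapsTo f s s) (hx : x ∈ s) (hfix : IsFixedPt f x) (hz : z ∈ s) :
    Tendsto (fun n ↦ f^[n] z) atTop (𝓝 x) := by
  have hpow : Tendsto (fun n : ℕ ↦ (K : ℝ) ^ n * dist z x) atTop (𝓝 0) := by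
    simpa using (tendsto_pow_atTop_nhds_zero_of_lt_one K.coe_nonneg hK).mul_const (dist z x)
  exact tendsto_iff_dist_tendsto_zero.2 <|
    squeeze_zero (fun _ ↦ dist_nonneg) (hlip.dist_iterate_le_of_isFixedPt hmaps hx hfix hz) hpow

end ContractionToFixedPoint

theorem isMaxOn_of_le_comp_of_tendsto_iterate {α β : Type*} [TopologicalSpace α]
    [TopologicalSpace β] [Preorder β] [OrderClosedTopology β] {f : α → α} {g : α → β}
    {s : Set α} {x : α} (hmaps : MapsTo f s s) (hmono : ∀ z ∈ s, g z ≤ g (f z))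
    (hg : ContinuousAt g x) (htend : ∀ z ∈ s, Tendsto (fun n ↦ f^[n] z) atTop (𝓝 x)) :
    IsMaxOn g s x := by
  intro z hz
  have horbit : Monotone fun n ↦ g (f^[n] z) := monotone_nat_of_le_succ fun n ↦ by
    simpa only [iterate_succ_apply'] using hmono _ (hmaps.iterate n hz)
  exact horbit.ge_of_tendsto (hg.tendsto.comp (htend z hz)) 0

theorem IsLocalMax.gradient_eq_zero {F : Type*} [NormedAddCommGroup F] [InnerProductSpace ℝ F]
    [CompleteSpace F] {g : F → ℝ} {x : F} (h : IsLocalMax g x) : gradient g x = 0 := by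
  rw [← (InnerProductSpace.toDual ℝ F).map_eq_zero_iff, toDual_gradient,
    h.fderiv_eq_zero]

theorem stmt_14_general (d : ℕ) (Ω : Set (EuclideanSpace ℝ (Fin d)))
    (f : EuclideanSpace ℝ (Fin d) → EuclideanSpace ℝ (Fin d))
    (hmaps : Set.MapsTo f Ω Ω) (K : NNReal) (hK : K < 1) (hlip : LipschitzOnWith K f Ω)
    (zs : EuclideanSpace ℝ (Fin d)) (hzs : zs ∈ interior Ω) (hfix : f zs = zs)
    (g : EuclideanSpace ℝ (Fin d) → ℝ) (hg : ContinuousOn g Ω)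
    (hmono : ∀ z ∈ Ω, g z ≤ g (f z)) :
    gradient g zs = 0 := by
  have hΩ : Ω ∈ 𝓝 zs := mem_interior_iff_mem_nhds.mp hzs
  have hmax : IsMaxOn g Ω zs :=
    isMaxOn_of_le_comp_of_tendsto_iterate hmaps hmono (hg.continuousAt hΩ) fun _ hz ↦
      hlip.tendsto_iterate_of_isFixedPt hK hmaps (mem_of_mem_nhds hΩ) hfix hz
  exact (hmax.isLocalMax hΩ).gradient_eq_zero

/-- Stationarity of the limit: under the hypotheses of the convergence theorem, with the
fixed point `z*` in the interior of `Ω` and `g` differentiable at `z*`, the gradient of `g`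
vanishes at `z*`. -/
theorem stmt_14 (d : ℕ) (Ω : Set (EuclideanSpace ℝ (Fin d))) (hne : Ω.Nonempty)
    (hclosed : IsClosed Ω) (f : EuclideanSpace ℝ (Fin d) → EuclideanSpace ℝ (Fin d))
    (hmaps : Set.MapsTo f Ω Ω) (K : NNReal) (hK : K < 1) (hlip : LipschitzOnWith K f Ω)
    (zs : EuclideanSpace ℝ (Fin d)) (hzs : zs ∈ interior Ω) (hfix : f zs = zs)
    (g : EuclideanSpace ℝ (Fin d) → ℝ) (hg : ContinuousOn g Ω)
    (hdiff : DifferentiableAt ℝ g zs)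
    (hmono : ∀ z ∈ Ω, g z ≤ g (f z)) :
    gradient g zs = 0 :=
  stmt_14_general d Ω f hmaps K hK hlip zs hzs hfix g hg hmono
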